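/- Let φ be differentiable and strictly convex on an open convex set D ⊆ ℝ^K, let X ⊆ D be nonempty, closed, and convex, and let x⁺ be the Bregman projection of y onto X, i.e., a minimizer over X of x ↦ D_φ(x, y). Then for every x ∈ X, D_φ(x, y) ≥ D_φ(x, x⁺) + D_φ(x⁺, y). -/

import Mathlib

open InnerProductSpace

/-- Bregman divergence of `φ`. -/
noncomputable def bregman {K : ℕ} (φ : EuclideanSpace ℝ (Fin K) → ℝ)
    (u v : EuclideanSpace ℝ (Fin K)) : ℝ :=
  φ u - φ v - inner ℝ (gradient φ v) (u - v)

/-!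
The minimality of `x⁺` gives the first-order condition `⟪∇φ x⁺ - ∇φ y, x - x⁺⟫ ≥ 0` for
`x ∈ X`, and the three-point identity
`D(x, y) = D(x, x⁺) + D(x⁺, y) + ⟪∇φ x⁺ - ∇φ y, x - x⁺⟫` turns it into the claim.
-/

theorem IsMinOn.hasFDerivWithinAt_sub_nonneg {E : Type*} [NormedAddCommGroup E]
    [NormedSpace ℝ E] {f : E → ℝ} {f' : StrongDual ℝ E} {s : Set E} {a x : E}
    (hmin : IsMinOn f s a) (hf : HasFDerivWithinAt f f' s a) (hs : Convex ℝ s)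
    (ha : a ∈ s) (hx : x ∈ s) : 0 ≤ f' (x - a) :=
  hmin.localize.hasFDerivWithinAt_nonneg hf
    (sub_mem_posTangentConeAt_of_segment_subset (hs.segment_subset ha hx))

section Bregman

variable {K : ℕ} (φ : EuclideanSpace ℝ (Fin K) → ℝ)

theorem bregman_add_bregman_add_inner (x z y : EuclideanSpace ℝ (Fin K)) :
    bregman φ x z + bregman φ z y + inner ℝ (gradient φ z - gradient φ y) (x - z) =
      bregman φ x y := by
  have hsplit : x - y = (x - z) + (z - y) := by abel
  simp only [bregman, hsplit, inner_add_right, inner_sub_left]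
  ring

theorem hasFDerivAt_bregman_left {z : EuclideanSpace ℝ (Fin K)} (hφ : DifferentiableAt ℝ φ z)
    (y : EuclideanSpace ℝ (Fin K)) :
    HasFDerivAt (fun u => bregman φ u y)
      (toDual ℝ _ (gradient φ z) - innerSL ℝ (gradient φ y)) z := by
  have hlin : HasFDerivAt (fun u => inner ℝ (gradient φ y) (u - y))
      (innerSL ℝ (gradient φ y)) z :=
    (innerSL ℝ (gradient φ y)).hasFDerivAt.comp z ((hasFDerivAt_id z).sub_const y)
  exact ((hasGradientAt_iff_hasFDerivAt.mp hφ.hasGradientAt).sub_const (φ y)).sub hlin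

theorem inner_gradient_sub_nonneg_of_isMinOn_bregman {X : Set (EuclideanSpace ℝ (Fin K))}
    {x xp y : EuclideanSpace ℝ (Fin K)} (hmin : IsMinOn (fun u => bregman φ u y) X xp)
    (hφ : DifferentiableAt ℝ φ xp) (hX : Convex ℝ X) (hxp : xp ∈ X) (hx : x ∈ X) :
    0 ≤ inner ℝ (gradient φ xp - gradient φ y) (x - xp) := by
  have h := hmin.hasFDerivWithinAt_sub_nonneg
    (hasFDerivAt_bregman_left φ hφ y).hasFDerivWithinAt hX hxp hx
  simpa [inner_sub_left] using h

end Bregman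

theorem bregman_pythagoras_general {K : ℕ} (D : Set (EuclideanSpace ℝ (Fin K)))
    (φ : EuclideanSpace ℝ (Fin K) → ℝ)
    (hφdiff : ∀ z ∈ D, DifferentiableAt ℝ φ z)
    (X : Set (EuclideanSpace ℝ (Fin K))) (hXD : X ⊆ D)
    (hXconv : Convex ℝ X)
    (y : EuclideanSpace ℝ (Fin K))
    (xp : EuclideanSpace ℝ (Fin K)) (hxpX : xp ∈ X)
    (hmin : ∀ x ∈ X, bregman φ xp y ≤ bregman φ x y) :
    ∀ x ∈ X, bregman φ x xp + bregman φ xp y ≤ bregman φ x y := by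
  intro x hxX
  have hopt := inner_gradient_sub_nonneg_of_isMinOn_bregman φ hmin (hφdiff xp (hXD hxpX))
    hXconv hxpX hxX
  linarith [bregman_add_bregman_add_inner φ x xp y]

/-- Bregman Pythagorean theorem. -/
theorem bregman_pythagoras {K : ℕ} (D : Set (EuclideanSpace ℝ (Fin K)))
    (hD : IsOpen D) (hDconv : Convex ℝ D)
    (φ : EuclideanSpace ℝ (Fin K) → ℝ)
    (hφdiff : ∀ z ∈ D, DifferentiableAt ℝ φ z)
    (hφconv : StrictConvexOn ℝ D φ)
    (X : Set (EuclideanSpace ℝ (Fin K))) (hXD : X ⊆ D)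
    (hXne : X.Nonempty) (hXclosed : IsClosed X) (hXconv : Convex ℝ X)
    (y : EuclideanSpace ℝ (Fin K)) (hy : y ∈ D)
    (xp : EuclideanSpace ℝ (Fin K)) (hxpX : xp ∈ X)
    (hmin : ∀ x ∈ X, bregman φ xp y ≤ bregman φ x y) :
    ∀ x ∈ X, bregman φ x xp + bregman φ xp y ≤ bregman φ x y :=
  bregman_pythagoras_general D φ hφdiff X hXD hXconv y xp hxpX hmin
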